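/- arXiv:1412.0465 — 11 statements merged into one kernel-verified Lean document; each statement's English description precedes it below -/
import Mathlib

section
/- Let g be a symmetric bilinear form on a real vector space V, W ∈ V, ε ∈ {1,−1}, and v ∈ V. Set h(v,v) = g(v,W)² + g(v,v)(1 − g(W,W)). Assume g(W,W) ≠ 1, h(v,v) > 0, and that Z := (g(v,W) − ε·√(h(v,v)))/(g(W,W) − 1) is positive. Then g(v/Z − W, v/Z − W) = 1; that is, Z = Z_ε(v) solves the Zermelo navigation equation for the metric g and the wind W. -/
/-!
Expanding the bilinear form and multiplying by `Z²` turns the navigation equation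
`g(v/Z − W, v/Z − W) = 1` into the quadratic `(g(W,W) − 1) Z² − 2 g(v,W) Z + g(v,v) = 0`,
whose discriminant is `4 h(v,v)`; the two values `Z_ε` are exactly its roots.
-/

lemma quadratic_eq_zero_of_eq_reduced_root {a b c ε x : ℝ} (ha : a ≠ 0) (hε : ε ^ 2 = 1)
    (hd : 0 ≤ b ^ 2 - a * c) (hx : x = (b - ε * Real.sqrt (b ^ 2 - a * c)) / a) :
    a * (x * x) + -2 * b * x + c = 0 := by
  have hdiscrim : discrim a (-2 * b) c
      = (2 * ε * Real.sqrt (b ^ 2 - a * c)) * (2 * ε * Real.sqrt (b ^ 2 - a * c)) := by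
    have hsq := Real.mul_self_sqrt hd
    rw [discrim]
    linear_combination (-4 * ε ^ 2) * hsq - 4 * (b ^ 2 - a * c) * hε
  refine (quadratic_eq_zero_iff ha hdiscrim x).2 (Or.inr ?_)
  rw [hx]
  field_simp

section SymmetricBilinear

variable {V : Type*} [AddCommGroup V] [Module ℝ V] (g : V →ₗ[ℝ] V →ₗ[ℝ] ℝ)

lemma apply_smul_sub_smul_sub (hg : ∀ x y : V, g x y = g y x) (a : ℝ) (v W : V) :
    g (a • v - W) (a • v - W) = a ^ 2 * g v v - 2 * a * g v W + g W W := by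
  simp only [map_sub, map_smul, LinearMap.sub_apply, LinearMap.smul_apply, smul_eq_mul,
    hg W v]
  ring

lemma apply_inv_smul_sub_eq_one_iff (hg : ∀ x y : V, g x y = g y x) {Z : ℝ} (hZ : Z ≠ 0)
    (v W : V) :
    g (Z⁻¹ • v - W) (Z⁻¹ • v - W) = 1 ↔
      (g W W - 1) * (Z * Z) + -2 * g v W * Z + g v v = 0 := by
  rw [apply_smul_sub_smul_sub g hg]
  constructor <;> intro h
  · field_simp at h
    linear_combination h
  · field_simp
    linear_combination h

end SymmetricBilinear

/-- If `g(W,W) ≠ 1`, `h(v,v) := g(v,W)² + g(v,v)(1 − g(W,W)) > 0` and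
`Z := (g(v,W) − ε√(h(v,v)))/(g(W,W) − 1)` is positive, then `Z` solves the Zermelo
navigation equation `g(v/Z − W, v/Z − W) = 1` for the metric `g` and wind `W`. -/
theorem stmt2 {V : Type*} [AddCommGroup V] [Module ℝ V]
    (g : V →ₗ[ℝ] V →ₗ[ℝ] ℝ) (hgsym : ∀ x y : V, g x y = g y x)
    (W v : V) (ε : ℝ) (hε : ε = 1 ∨ ε = -1)
    (hW : g W W ≠ 1)
    (h : ℝ) (hh : h = (g v W) ^ 2 + g v v * (1 - g W W)) (hhpos : 0 < h)
    (Z : ℝ) (hZ : Z = (g v W - ε * Real.sqrt h) / (g W W - 1)) (hZpos : 0 < Z) :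
    g (Z⁻¹ • v - W) (Z⁻¹ • v - W) = 1 := by
  have hdiscrim : h = g v W ^ 2 - (g W W - 1) * g v v := by rw [hh]; ring
  have hε2 : ε ^ 2 = 1 := by rcases hε with rfl | rfl <;> norm_num
  rw [apply_inv_smul_sub_eq_one_iff g hgsym hZpos.ne']
  rw [hdiscrim] at hZ hhpos
  exact quadratic_eq_zero_of_eq_reduced_root (sub_ne_zero.mpr hW) hε2 hhpos.le hZ
end

section
/- Let g be a symmetric bilinear form on a real vector space V, W ∈ V, ε ∈ {1,−1}, and v ∈ V. Set h(v,v) = g(v,W)² + g(v,v)(1 − g(W,W)). Assume g(W,W) ≠ 1, h(v,v) ≥ 0, and that Z := (g(v,W) − ε·√(h(v,v)))/(g(W,W) − 1) is positive. Then g(v/Z − W, v) = ε·√(h(v,v)); in particular Z is a straight translation value when ε = 1 (the quantity is nonnegative) and a reverse one when ε = −1 (it is nonpositive). -/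
/-- If `g(W,W) ≠ 1`, `h(v,v) := g(v,W)² + g(v,v)(1 − g(W,W)) ≥ 0` and
`Z := (g(v,W) − ε√(h(v,v)))/(g(W,W) − 1)` is positive, then
`g(v/Z − W, v) = ε√(h(v,v))`; in particular this quantity is nonnegative when
`ε = 1` (straight translation) and nonpositive when `ε = −1` (reverse one). -/
theorem stmt4 {V : Type*} [AddCommGroup V] [Module ℝ V]
    (g : V →ₗ[ℝ] V →ₗ[ℝ] ℝ) (hgsym : ∀ x y : V, g x y = g y x)
    (W v : V) (ε : ℝ) (hε : ε = 1 ∨ ε = -1)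
    (hW : g W W ≠ 1)
    (h : ℝ) (hh : h = (g v W) ^ 2 + g v v * (1 - g W W)) (hhnonneg : 0 ≤ h)
    (Z : ℝ) (hZ : Z = (g v W - ε * Real.sqrt h) / (g W W - 1)) (hZpos : 0 < Z) :
    g (Z⁻¹ • v - W) v = ε * Real.sqrt h
      ∧ (ε = 1 → 0 ≤ g (Z⁻¹ • v - W) v)
      ∧ (ε = -1 → g (Z⁻¹ • v - W) v ≤ 0) := by
  set a := g v W
  set b := g v v
  set c := g W W
  set s := Real.sqrt h with hs
  have hsnn : 0 ≤ s := Real.sqrt_nonneg h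
  have hs2 : s ^ 2 = h := Real.sq_sqrt hhnonneg
  have hc1 : c - 1 ≠ 0 := sub_ne_zero.mpr hW
  have hden : a - ε * s ≠ 0 := by
    intro h0
    rw [h0, zero_div] at hZ
    exact hZpos.ne' hZ
  have hZne : Z ≠ 0 := hZpos.ne'
  have hZval : Z * (c - 1) = a - ε * s := by
    rw [hZ, div_mul_cancel₀ _ hc1]
  have hexp : g (Z⁻¹ • v - W) v = Z⁻¹ * b - a := by
    simp [map_sub, hgsym W v, a, b]
  have hinv : Z⁻¹ = (c - 1) / (a - ε * s) := by
    rw [hZ, inv_div]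
  have key : Z⁻¹ * b - a = ε * s := by
    rw [hinv, div_mul_eq_mul_div, sub_eq_iff_eq_add, div_eq_iff hden]
    have hε2 : ε ^ 2 = 1 := by rcases hε with h1 | h1 <;> simp [h1]
    rw [show (ε * s + a) * (a - ε * s) = a ^ 2 - ε ^ 2 * s ^ 2 by ring, hε2, hs2, hh]
    ring
  refine ⟨hexp.trans key, ?_, ?_⟩
  · intro h1; rw [hexp, key, h1]; simpa using hsnn
  · intro h1; rw [hexp, key, h1]; simpa using hsnn
end

section
/- Let h be a symmetric bilinear form on a real vector space V and B ∈ V with δ := 1 − h(B,B) ≠ 0. Define W = −B/δ and the symmetric bilinear form g(u,u') = δ·(h(u,u') − h(B,u)·h(B,u')). Let ε ∈ {1,−1} and let v ∈ V satisfy h(v,v) > 0 and R := ε·√(h(v,v)) + h(B,v) > 0. Then g(v/R − W, v/R − W) = 1; that is, the pseudo-Randers metric R_ε(v) = ε·√(h(v,v)) + h(B,v) is the translation of the indicatrix of g by the vector W. -/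
/-! With `u = v/R`, the identity `(R - h(B,v))² = ε² h(v,v) = h(v,v)` says exactly that
`h(u,u) - h(B,u)² + 2 h(B,u) = 1`. Translating by `W = -B/δ` and expanding, the form `g` turns this
quantity into `δ · 1 + h(B,B) = 1`. -/

lemma sq_sub_eq_of_eq_sign_mul_sqrt_add {a b ε R : ℝ} (hε : ε = 1 ∨ ε = -1) (ha : 0 ≤ a)
    (hR : R = ε * √a + b) : (R - b) ^ 2 = a := by
  rcases hε with rfl | rfl <;> simp [hR, Real.sq_sqrt ha]

section Translation

variable {V : Type*} [AddCommGroup V] [Module ℝ V] (h : V →ₗ[ℝ] V →ₗ[ℝ] ℝ) (B : V)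

lemma mul_sub_sq_add_inv_smul (hsym : ∀ x y : V, h x y = h y x) {δ : ℝ}
    (hδdef : δ = 1 - h B B) (hδ : δ ≠ 0) (u : V) :
    δ * (h (u + δ⁻¹ • B) (u + δ⁻¹ • B) - h B (u + δ⁻¹ • B) ^ 2)
      = δ * (h u u - h B u ^ 2 + 2 * h B u) + h B B := by
  simp only [map_add, map_smul, LinearMap.add_apply, LinearMap.smul_apply, smul_eq_mul,
    hsym u B]
  field_simp
  rw [hδdef]
  ring

lemma sub_sq_add_two_mul_inv_smul_eq_one {v : V} {R : ℝ} (hR0 : R ≠ 0)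
    (hR : (R - h B v) ^ 2 = h v v) :
    h (R⁻¹ • v) (R⁻¹ • v) - h B (R⁻¹ • v) ^ 2 + 2 * h B (R⁻¹ • v) = 1 := by
  simp only [map_smul, LinearMap.smul_apply, smul_eq_mul]
  field_simp
  linear_combination -hR

end Translation

/-- A pseudo-Randers metric `R_ε(v) = ε√(h(v,v)) + h(B,v)` (with `δ := 1 − h(B,B) ≠ 0`)
is the translation by the vector `W = −B/δ` of the semi-Riemannian metric
`g(u,u') = δ(h(u,u') − h(B,u)h(B,u'))`: one has `g(v/R − W, v/R − W) = 1`. -/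
theorem stmt5 {V : Type*} [AddCommGroup V] [Module ℝ V]
    (h : V →ₗ[ℝ] V →ₗ[ℝ] ℝ) (hhsym : ∀ x y : V, h x y = h y x) (B : V)
    (δ : ℝ) (hδdef : δ = 1 - h B B) (hδ : δ ≠ 0)
    (W : V) (hW : W = -(δ⁻¹ • B))
    (g : V → V → ℝ) (hg : ∀ u u' : V, g u u' = δ * (h u u' - h B u * h B u'))
    (ε : ℝ) (hε : ε = 1 ∨ ε = -1)
    (v : V) (hv : 0 < h v v)
    (R : ℝ) (hR : R = ε * Real.sqrt (h v v) + h B v) (hRpos : 0 < R) :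
    g (R⁻¹ • v - W) (R⁻¹ • v - W) = 1 := by
  have hRsq : (R - h B v) ^ 2 = h v v := sq_sub_eq_of_eq_sign_mul_sqrt_add hε hv.le hR
  rw [hg, hW, sub_neg_eq_add, ← sq, mul_sub_sq_add_inv_smul h B hhsym hδdef hδ,
    sub_sq_add_two_mul_inv_smul_eq_one h B hRpos.ne' hRsq, hδdef]
  ring
end

section
/- Let h be a symmetric bilinear form on a real vector space V and B ∈ V with δ := 1 − h(B,B) ≠ 0. Define W = −B/δ and g(u,u') = δ·(h(u,u') − h(B,u)·h(B,u')). Then: (i) 1 − g(W,W) = δ; (ii) g(v,W) = (g(W,W) − 1)·h(v,B) for every v ∈ V; and (iii) g(v,W)² − g(v,v)·(g(W,W) − 1) = δ²·h(v,v) for every v ∈ V. -/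
/-- For `δ := 1 − h(B,B) ≠ 0`, `W = −B/δ` and `g(u,u') = δ(h(u,u') − h(B,u)h(B,u'))`:
(i) `1 − g(W,W) = δ`; (ii) `g(v,W) = (g(W,W) − 1)·h(v,B)` for all `v`; and
(iii) `g(v,W)² − g(v,v)(g(W,W) − 1) = δ²·h(v,v)` for all `v`. -/
theorem stmt6 {V : Type*} [AddCommGroup V] [Module ℝ V]
    (h : V →ₗ[ℝ] V →ₗ[ℝ] ℝ) (hhsym : ∀ x y : V, h x y = h y x) (B : V)
    (δ : ℝ) (hδdef : δ = 1 - h B B) (hδ : δ ≠ 0)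
    (W : V) (hW : W = -(δ⁻¹ • B))
    (g : V → V → ℝ) (hg : ∀ u u' : V, g u u' = δ * (h u u' - h B u * h B u')) :
    1 - g W W = δ
      ∧ (∀ v : V, g v W = (g W W - 1) * h v B)
      ∧ (∀ v : V, (g v W) ^ 2 - g v v * (g W W - 1) = δ ^ 2 * h v v) := by
  subst hW
  have hb : h B B = 1 - δ := by linarith
  have h1 : g (-(δ⁻¹ • B)) (-(δ⁻¹ • B)) = 1 - δ := by
    rw [hg]
    simp only [map_neg, map_smul, LinearMap.neg_apply, LinearMap.smul_apply,
      smul_eq_mul, hb]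
    field_simp; ring
  refine ⟨by rw [h1]; ring, fun v => ?_, fun v => ?_⟩
  · rw [hg, h1, hhsym B v]
    simp only [map_neg, map_smul, smul_eq_mul, hb]
    field_simp; ring
  · rw [hg, hg, h1, hhsym B v]
    simp only [map_neg, map_smul, smul_eq_mul, hb]
    field_simp; ring
end

section
/- Let h be a symmetric bilinear form on a real vector space V and B ∈ V with h(B,B) ≠ 0, and define the symmetric bilinear form g = (4/h(B,B))·h. Then for every v ∈ V: h(v,v) = h(v,B) if and only if g(v − B/2, v − B/2) = 1. In other words, the indicatrix of the pseudo-Kropina metric K(v) = h(v,v)/h(v,B) is the translation by the vector B/2 of the indicatrix of g. -/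
/-!
Completing the square: by symmetry of `h`,
`h(v − B/2, v − B/2) = (h(v,v) − h(v,B)) + h(B,B)/4`,
so after scaling by `4/h(B,B)` the right-hand side equals `1` exactly when `h(v,v) = h(v,B)`.
-/

theorem LinearMap.apply_sub_smul_apply_sub_smul {R M : Type*} [CommRing R] [AddCommGroup M]
    [Module R M] (h : M →ₗ[R] M →ₗ[R] R) {v B : M} (hsym : h B v = h v B) (c : R) :
    h (v - c • B) (v - c • B) = h v v - 2 * c * h v B + c ^ 2 * h B B := by
  simp only [map_sub, map_smul, LinearMap.sub_apply, LinearMap.smul_apply, smul_eq_mul, hsym]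
  ring

theorem div_mul_add_quarter_eq_one_iff {a x : ℝ} (ha : a ≠ 0) :
    4 / a * (x + 4⁻¹ * a) = 1 ↔ x = 0 := by
  have expand : 4 / a * (x + 4⁻¹ * a) = 4 * x / a + 1 := by
    field_simp
  rw [expand, add_eq_right, div_eq_zero_iff]
  simp [ha]

/-- For `h(B,B) ≠ 0` and `g = (4/h(B,B))·h`, one has `h(v,v) = h(v,B)` iff
`g(v − B/2, v − B/2) = 1`: the indicatrix of the pseudo-Kropina metric
`K(v) = h(v,v)/h(v,B)` is the translation by `B/2` of the indicatrix of `g`. -/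
theorem stmt8 {V : Type*} [AddCommGroup V] [Module ℝ V]
    (h : V →ₗ[ℝ] V →ₗ[ℝ] ℝ) (hhsym : ∀ x y : V, h x y = h y x) (B : V)
    (hB : h B B ≠ 0)
    (g : V → V → ℝ) (hg : ∀ u u' : V, g u u' = (4 / h B B) * h u u') :
    ∀ v : V, h v v = h v B ↔ g (v - (2 : ℝ)⁻¹ • B) (v - (2 : ℝ)⁻¹ • B) = 1 := by
  intro v
  have square : h (v - (2 : ℝ)⁻¹ • B) (v - (2 : ℝ)⁻¹ • B) = (h v v - h v B) + 4⁻¹ * h B B := by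
    rw [h.apply_sub_smul_apply_sub_smul (hhsym B v)]
    ring
  rw [hg, square, div_mul_add_quarter_eq_one_iff hB, sub_eq_zero]
end

section
/- Let F be a pseudo-Minkowski norm on V with fundamental tensor g and Legendre transformation ℒ_F, let v ∈ A with F(v) = 1, let ξ ∈ V*, and let λ > 0. Then ℒ_F(λv) = ξ if and only if ξ(z) = 0 for every z ∈ V with g_v(v,z) = 0 and ξ(v) = λ (i.e. v is a critical point of the restriction of ξ to the indicatrix Σ = {u ∈ A : F(u) = 1}, with positive critical value λ). Moreover, λ is the unique positive real number such that ℒ_F(λv) = ξ, and F(λv) = λ. -/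
/-- The fundamental tensor of a pseudo-Minkowski norm `F` at `v`. -/
noncomputable def fundTensor {V : Type*} [NormedAddCommGroup V] [NormedSpace ℝ V]
    (F : V → ℝ) (v u w : V) : ℝ :=
  (1 / 2) * deriv (fun t : ℝ => deriv (fun s : ℝ => (F (v + t • u + s • w)) ^ 2) 0) 0

/-- A (conic) pseudo-Minkowski norm on `V` with domain `A`. -/
structure IsPseudoMinkowski {V : Type*} [NormedAddCommGroup V] [NormedSpace ℝ V]
    (A : Set V) (F : V → ℝ) : Prop where
  isOpen : IsOpen A
  zero_not_mem : (0 : V) ∉ A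
  conic : ∀ v ∈ A, ∀ l : ℝ, 0 < l → l • v ∈ A
  smooth : ContDiffOn ℝ (⊤ : ℕ∞) F A
  pos : ∀ v ∈ A, 0 < F v
  homog : ∀ v ∈ A, ∀ l : ℝ, 0 < l → F (l • v) = l * F v
  nondeg : ∀ v ∈ A, ∀ u : V, (∀ w : V, fundTensor F v u w = 0) → u = 0

section AuxPM
variable {V : Type*} [NormedAddCommGroup V] [NormedSpace ℝ V] {A : Set V} {F : V → ℝ}

lemma aux_fd (hF : IsPseudoMinkowski A F) {w : V} (hw : w ∈ A) :
    DifferentiableAt ℝ (fun u => F u ^ 2) w := by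
  have : ContDiffOn ℝ (⊤ : ℕ∞) (fun u => F u ^ 2) A := hF.smooth.pow 2
  exact (this.contDiffAt (hF.isOpen.mem_nhds hw)).differentiableAt (by simp)

lemma aux_Dhom (hF : IsPseudoMinkowski A F) {v : V} (hv : v ∈ A) {l : ℝ} (hl : 0 < l) (z : V) :
    fderiv ℝ (fun u => F u ^ 2) (l • v) z = l * fderiv ℝ (fun u => F u ^ 2) v z := by
  set f : V → ℝ := fun u => F u ^ 2 with hf
  have hlv : l • v ∈ A := hF.conic v hv l hl
  have h1 : HasFDerivAt f (fderiv ℝ f (l • v)) (l • v) := (aux_fd hF hlv).hasFDerivAt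
  have hg : HasFDerivAt (fun u : V => l • u) (l • ContinuousLinearMap.id ℝ V) v :=
    (hasFDerivAt_id v).const_smul l
  have hcomp : HasFDerivAt (fun u => f (l • u))
      ((fderiv ℝ f (l • v)).comp (l • ContinuousLinearMap.id ℝ V)) v := h1.comp v hg
  have heq : (fun u => l ^ 2 * f u) =ᶠ[nhds v] (fun u => f (l • u)) := by
    filter_upwards [hF.isOpen.mem_nhds hv] with u hu
    simp only [hf, hF.homog u hu l hl]; ring
  have h2 : HasFDerivAt (fun u => l ^ 2 * f u) (l ^ 2 • fderiv ℝ f v) v :=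
    ((aux_fd hF hv).hasFDerivAt).const_mul _
  have := (hcomp.congr_of_eventuallyEq heq).unique h2
  have happ := congrArg (fun T : V →L[ℝ] ℝ => T z) this
  simp only [ContinuousLinearMap.comp_apply, ContinuousLinearMap.smul_apply,
    ContinuousLinearMap.coe_smul', Pi.smul_apply, ContinuousLinearMap.id_apply,
    map_smul, smul_eq_mul] at happ
  have hl' : l ≠ 0 := ne_of_gt hl
  nlinarith [happ]

lemma aux_euler (hF : IsPseudoMinkowski A F) {v : V} (hv : v ∈ A) :
    fderiv ℝ (fun u => F u ^ 2) v v = 2 * F v ^ 2 := by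
  set f : V → ℝ := fun u => F u ^ 2 with hf
  have hγ : HasDerivAt (fun t : ℝ => t • v) v 1 := by
    simpa using (hasDerivAt_id (1:ℝ)).smul_const v
  have hd : HasFDerivAt f (fderiv ℝ f v) ((1:ℝ) • v) := by
    rw [one_smul]; exact (aux_fd hF hv).hasFDerivAt
  have h1 : HasDerivAt (fun t : ℝ => f (t • v)) (fderiv ℝ f v v) 1 :=
    HasFDerivAt.comp_hasDerivAt (f := fun t : ℝ => t • v) 1 hd hγ
  have heq : (fun t : ℝ => t ^ 2 * f v) =ᶠ[nhds 1] (fun t : ℝ => f (t • v)) := by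
    filter_upwards [isOpen_Ioi.mem_nhds (show (0:ℝ) < 1 by norm_num)] with t ht
    simp only [hf, hF.homog v hv t ht]; ring
  have h2 : HasDerivAt (fun t : ℝ => t ^ 2 * f v) (2 * f v) 1 := by
    simpa using (hasDerivAt_pow 2 (1:ℝ)).mul_const (f v)
  exact (h1.congr_of_eventuallyEq heq).unique h2

lemma aux_line (hF : IsPseudoMinkowski A F) {w : V} (hw : w ∈ A) (z : V) :
    deriv (fun s : ℝ => F (w + s • z) ^ 2) 0 = fderiv ℝ (fun u => F u ^ 2) w z := by
  set f : V → ℝ := fun u => F u ^ 2 with hf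
  have hγ : HasDerivAt (fun s : ℝ => w + s • z) z 0 := by
    simpa using ((hasDerivAt_id (0:ℝ)).smul_const z).const_add w
  have hd : HasFDerivAt f (fderiv ℝ f w) (w + (0:ℝ) • z) := by
    rw [zero_smul, add_zero]; exact (aux_fd hF hw).hasFDerivAt
  exact (hd.comp_hasDerivAt 0 hγ).deriv

lemma aux_L1 (hF : IsPseudoMinkowski A F) {w : V} (hw : w ∈ A) (z : V) :
    fundTensor F w w z = (1 / 2) * fderiv ℝ (fun u => F u ^ 2) w z := by
  set c : ℝ := fderiv ℝ (fun u => F u ^ 2) w z with hc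
  have key : deriv (fun t : ℝ => deriv (fun s : ℝ => (F (w + t • w + s • z)) ^ 2) 0) 0 = c := by
    have heq : (fun t : ℝ => (1 + t) * c) =ᶠ[nhds 0]
        (fun t : ℝ => deriv (fun s : ℝ => (F (w + t • w + s • z)) ^ 2) 0) := by
      filter_upwards [isOpen_Ioi.mem_nhds (show (-1:ℝ) < 0 by norm_num)] with t ht
      have ht' : (0:ℝ) < 1 + t := by have : (-1:ℝ) < t := ht; linarith
      have hmem : (1 + t) • w ∈ A := hF.conic w hw _ ht'
      have hrw : ∀ s : ℝ, w + t • w + s • z = (1 + t) • w + s • z := by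
        intro s; rw [add_smul, one_smul]
      calc (1 + t) * c = fderiv ℝ (fun u => F u ^ 2) ((1 + t) • w) z :=
            (aux_Dhom hF hw ht' z).symm
        _ = deriv (fun s : ℝ => F ((1 + t) • w + s • z) ^ 2) 0 := (aux_line hF hmem z).symm
        _ = _ := by simp only [hrw]
    rw [← heq.deriv_eq]
    have : HasDerivAt (fun t : ℝ => (1 + t) * c) c 0 := by
      simpa using (((hasDerivAt_id (0:ℝ)).const_add 1).mul_const c)
    exact this.deriv
  rw [fundTensor, key]

end AuxPM

/-- For `v` in the indicatrix (`F(v) = 1`), `ξ ∈ V*` and `λ > 0`: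
`ℒ_F(λv) = ξ` (i.e. `g_{λv}(λv,·) = ξ`) iff `ξ` vanishes on the `g_v`-orthogonal
complement of `v` and `ξ(v) = λ`; i.e. `v` is a critical point of `ξ` restricted
to the indicatrix, with positive critical value `λ`. Moreover, `λ` is the unique
positive real with `ℒ_F(λv) = ξ`, and `F(λv) = λ`. -/
theorem stmt9 {V : Type*} [NormedAddCommGroup V] [NormedSpace ℝ V] [FiniteDimensional ℝ V]
    {A : Set V} {F : V → ℝ} (hF : IsPseudoMinkowski A F)
    {v : V} (hv : v ∈ A) (hv1 : F v = 1)
    (ξ : V →ₗ[ℝ] ℝ) {l : ℝ} (hl : 0 < l) :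
    ((∀ z : V, fundTensor F (l • v) (l • v) z = ξ z)
        ↔ ((∀ z : V, fundTensor F v v z = 0 → ξ z = 0) ∧ ξ v = l))
      ∧ ((∀ z : V, fundTensor F (l • v) (l • v) z = ξ z) →
          (∀ l' : ℝ, 0 < l' → (∀ z : V, fundTensor F (l' • v) (l' • v) z = ξ z) → l' = l)
            ∧ F (l • v) = l) := by
  set φ : V →L[ℝ] ℝ := fderiv ℝ (fun u => F u ^ 2) v with hφ
  have k2 : ∀ z : V, fundTensor F v v z = (1 / 2) * φ z := fun z => aux_L1 hF hv z
  have k1 : ∀ l' : ℝ, 0 < l' → ∀ z : V,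
      fundTensor F (l' • v) (l' • v) z = (1 / 2) * (l' * φ z) := by
    intro l' hl' z
    rw [aux_L1 hF (hF.conic v hv l' hl') z, aux_Dhom hF hv hl' z]
  have k3 : φ v = 2 := by rw [hφ, aux_euler hF hv, hv1]; norm_num
  constructor
  · constructor
    · intro H
      constructor
      · intro z hz
        rw [k2 z] at hz
        rw [← H z, k1 l hl z]
        nlinarith [hz]
      · rw [← H v, k1 l hl v, k3]; ring
    · rintro ⟨h0, hxv⟩ z
      rw [k1 l hl z]
      have hw0 : fundTensor F v v (z - ((1 / 2) * φ z) • v) = 0 := by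
        rw [k2, map_sub, map_smul, smul_eq_mul, k3]; ring
      have := h0 _ hw0
      rw [map_sub, map_smul, smul_eq_mul, sub_eq_zero] at this
      rw [this, hxv]; ring
  · intro H
    refine ⟨fun l' hl' H' => ?_, ?_⟩
    · have e1 := (H v).trans (H' v).symm
      rw [k1 l hl v, k1 l' hl' v, k3] at e1
      linarith
    · rw [hF.homog v hv l hl, hv1, mul_one]
end

section
/- Let F be a pseudo-Minkowski norm on V with Legendre transformation ℒ_F. Let O ⊆ V* be an open set and L : O → A a smooth map with ℒ_F(L(ξ)) = ξ for every ξ ∈ O (a local inverse of ℒ_F), and define the Legendre dual F* : O → (0,∞) by F* = F ∘ L. Then the inverse of the Legendre transformation is the fiber derivative of (1/2)(F*)²: for every ξ ∈ O and every η ∈ V*, (1/2)·D((F*)²)(ξ)(η) = η(L(ξ)). -/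
open Topology

section Aux
variable {V : Type*} [NormedAddCommGroup V] [NormedSpace ℝ V]
variable {A : Set V} {F : V → ℝ}

private lemma contDiffAt_sq (hF : IsPseudoMinkowski A F) {v : V} (hv : v ∈ A) :
    ContDiffAt ℝ (⊤ : ℕ∞) (fun x => (F x) ^ 2) v :=
  (hF.smooth.pow 2).contDiffAt (hF.isOpen.mem_nhds hv)

private lemma diffAt_sq (hF : IsPseudoMinkowski A F) {v : V} (hv : v ∈ A) :
    DifferentiableAt ℝ (fun x => (F x) ^ 2) v :=
  (contDiffAt_sq hF hv).differentiableAt (by simp)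

/-- Homogeneity of the derivative of `F²`. -/
private lemma hom_fderiv (hF : IsPseudoMinkowski A F) {v : V} (hv : v ∈ A)
    {l : ℝ} (hl : 0 < l) :
    fderiv ℝ (fun x => (F x) ^ 2) (l • v) = l • fderiv ℝ (fun x => (F x) ^ 2) v := by
  set G : V → ℝ := fun x => (F x) ^ 2 with hGdef
  have hlv : l • v ∈ A := hF.conic v hv l hl
  have hscale : HasFDerivAt (fun x : V => l • x) (l • ContinuousLinearMap.id ℝ V) v := by
    exact (hasFDerivAt_id v).const_smul l
  have h1 : HasFDerivAt (fun x => G (l • x))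
      ((fderiv ℝ G (l • v)).comp (l • ContinuousLinearMap.id ℝ V)) v := by
    have := ((diffAt_sq hF hlv).hasFDerivAt).comp v hscale
    simpa [Function.comp_def] using this
  have h2 : HasFDerivAt (fun x => l ^ 2 * G x) ((l ^ 2) • fderiv ℝ G v) v :=
    ((diffAt_sq hF hv).hasFDerivAt).const_mul (l ^ 2)
  have heq : (fun x => G (l • x)) =ᶠ[𝓝 v] (fun x => l ^ 2 * G x) := by
    filter_upwards [hF.isOpen.mem_nhds hv] with x hx
    simp [hGdef, hF.homog x hx l hl, mul_pow]
  have h3 := (h1.congr_of_eventuallyEq heq.symm).unique h2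
  ext w
  have h4 := congrFun (congrArg DFunLike.coe h3) w
  simp only [ContinuousLinearMap.coe_comp', Function.comp_apply,
    ContinuousLinearMap.smul_apply, ContinuousLinearMap.coe_id', id_eq, map_smul,
    smul_eq_mul] at h4 ⊢
  have hl0 : l ≠ 0 := ne_of_gt hl
  nlinarith [h4]

/-- On the diagonal, the fundamental tensor is half the derivative of `F²`. -/
private lemma fund_eq (hF : IsPseudoMinkowski A F) {v : V} (hv : v ∈ A) (w : V) :
    fundTensor F v v w = (1 / 2) * fderiv ℝ (fun x => (F x) ^ 2) v w := by
  set G : V → ℝ := fun x => (F x) ^ 2 with hGdef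
  have key : ∀ t : ℝ, -1 < t →
      deriv (fun s : ℝ => (F (v + t • v + s • w)) ^ 2) 0 = (1 + t) * fderiv ℝ G v w := by
    intro t ht
    have h1t : (0 : ℝ) < 1 + t := by linarith
    have hu : (1 + t) • v ∈ A := hF.conic v hv _ h1t
    have hvt : v + t • v = (1 + t) • v := by rw [add_smul, one_smul]
    have hc : HasDerivAt (fun s : ℝ => v + t • v + s • w) w 0 := by
      simpa using ((hasDerivAt_id (0 : ℝ)).smul_const w).const_add (v + t • v)
    have hG' : HasFDerivAt G (fderiv ℝ G ((1 + t) • v)) ((fun s : ℝ => v + t • v + s • w) 0) := by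
      simpa [hvt] using (diffAt_sq hF hu).hasFDerivAt
    have hd : HasDerivAt (fun s : ℝ => G (v + t • v + s • w))
        (fderiv ℝ G ((1 + t) • v) w) 0 := by
      simpa [Function.comp_def] using hG'.comp_hasDerivAt 0 hc
    rw [hd.deriv, hom_fderiv hF hv h1t]
    simp [hGdef]
  have houter : (fun t : ℝ => deriv (fun s : ℝ => (F (v + t • v + s • w)) ^ 2) 0)
      =ᶠ[𝓝 (0 : ℝ)] (fun t => (1 + t) * fderiv ℝ G v w) := by
    filter_upwards [Ioi_mem_nhds (show (-1 : ℝ) < 0 by norm_num)] with t ht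
    exact key t ht
  have hmain : deriv (fun t : ℝ => deriv (fun s : ℝ => (F (v + t • v + s • w)) ^ 2) 0) 0
      = fderiv ℝ G v w := by
    rw [houter.deriv_eq]
    have : HasDerivAt (fun t : ℝ => (1 + t) * fderiv ℝ G v w) (fderiv ℝ G v w) 0 := by
      simpa using ((hasDerivAt_id (0 : ℝ)).const_add 1).mul_const (fderiv ℝ G v w)
    exact this.deriv
  simp only [fundTensor]
  rw [hmain]

/-- Evaluation commutes with `fderiv`. -/
private lemma fderiv_apply_comm {W : Type*} [NormedAddCommGroup W] [NormedSpace ℝ W]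
    {f : W → V →L[ℝ] ℝ} {x : W} (hf : DifferentiableAt ℝ f x) (z : V) :
    HasFDerivAt (fun y => f y z)
      ((ContinuousLinearMap.apply ℝ ℝ z).comp (fderiv ℝ f x)) x := by
  have h := (ContinuousLinearMap.apply ℝ ℝ z).hasFDerivAt.comp x hf.hasFDerivAt
  simpa [Function.comp_def] using h

private lemma diff_fderiv_sq (hF : IsPseudoMinkowski A F) {v : V} (hv : v ∈ A) :
    DifferentiableAt ℝ (fderiv ℝ (fun x => (F x) ^ 2)) v := by
  have h1 : ContDiffAt ℝ 1 (fderiv ℝ (fun x => (F x) ^ 2)) v :=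
    (contDiffAt_sq hF hv).fderiv_right (by exact WithTop.coe_le_coe.mpr (le_top (a := ((1 + 1 : ℕ) : ℕ∞))))
  exact h1.differentiableAt one_ne_zero

/-- Euler's identity for the (degree-one homogeneous) derivative of `F²`. -/
private lemma euler (hF : IsPseudoMinkowski A F) {v : V} (hv : v ∈ A) (w : V) :
    fderiv ℝ (fderiv ℝ (fun x => (F x) ^ 2)) v v w
      = fderiv ℝ (fun x => (F x) ^ 2) v w := by
  set G : V → ℝ := fun x => (F x) ^ 2 with hGdef
  have hΦ : HasFDerivAt (fun x => fderiv ℝ G x w)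
      ((ContinuousLinearMap.apply ℝ ℝ w).comp (fderiv ℝ (fderiv ℝ G) v)) v :=
    fderiv_apply_comm (diff_fderiv_sq hF hv) w
  have hc : HasDerivAt (fun t : ℝ => v + t • v) v 0 := by
    simpa using ((hasDerivAt_id (0 : ℝ)).smul_const v).const_add v
  have hΦ' : HasFDerivAt (fun x => fderiv ℝ G x w)
      ((ContinuousLinearMap.apply ℝ ℝ w).comp (fderiv ℝ (fderiv ℝ G) v))
      ((fun t : ℝ => v + t • v) 0) := by simpa using hΦ
  have hcomp : HasDerivAt (fun t : ℝ => fderiv ℝ G (v + t • v) w)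
      (fderiv ℝ (fderiv ℝ G) v v w) 0 := by
    simpa [Function.comp_def] using hΦ'.comp_hasDerivAt 0 hc
  have heq : (fun t : ℝ => fderiv ℝ G (v + t • v) w)
      =ᶠ[𝓝 (0 : ℝ)] (fun t => (1 + t) * fderiv ℝ G v w) := by
    filter_upwards [Ioi_mem_nhds (show (-1 : ℝ) < 0 by norm_num)] with t ht
    have ht' : (-1 : ℝ) < t := ht
    have h1t : (0 : ℝ) < 1 + t := by linarith
    have hvt : v + t • v = (1 + t) • v := by rw [add_smul, one_smul]
    rw [hvt, hom_fderiv hF hv h1t]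
    simp [hGdef]
  have h2 : HasDerivAt (fun t : ℝ => (1 + t) * fderiv ℝ G v w) (fderiv ℝ G v w) 0 := by
    simpa using ((hasDerivAt_id (0 : ℝ)).const_add 1).mul_const (fderiv ℝ G v w)
  calc fderiv ℝ (fderiv ℝ G) v v w = deriv (fun t : ℝ => fderiv ℝ G (v + t • v) w) 0 :=
        hcomp.deriv.symm
    _ = deriv (fun t : ℝ => (1 + t) * fderiv ℝ G v w) 0 := heq.deriv_eq
    _ = fderiv ℝ G v w := h2.deriv

end Aux

/-- If `L : O → A` is a (smooth) local inverse of the Legendre transformation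
`ℒ_F(v) = g_v(v,·)` on an open set `O ⊆ V*`, and `F* = F ∘ L` is the corresponding
Legendre dual, then the inverse of `ℒ_F` is the fiber derivative of `(1/2)(F*)²`:
for every `ξ ∈ O` and `η ∈ V*`, `(1/2)·D((F*)²)(ξ)(η) = η(L(ξ))`. -/
theorem stmt10 {V : Type*} [NormedAddCommGroup V] [NormedSpace ℝ V] [FiniteDimensional ℝ V]
    {A : Set V} {F : V → ℝ} (hF : IsPseudoMinkowski A F)
    {O : Set (V →L[ℝ] ℝ)} (hO : IsOpen O)
    {L : (V →L[ℝ] ℝ) → V} (hLsmooth : ContDiffOn ℝ (⊤ : ℕ∞) L O)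
    (hLA : ∀ ξ ∈ O, L ξ ∈ A)
    (hLinv : ∀ ξ ∈ O, ∀ z : V, fundTensor F (L ξ) (L ξ) z = ξ z) :
    ∀ ξ ∈ O, ∀ η : V →L[ℝ] ℝ,
      (1 / 2) * fderiv ℝ (fun ζ : V →L[ℝ] ℝ => (F (L ζ)) ^ 2) ξ η = η (L ξ) := by
  intro ξ hξ η
  set G : V → ℝ := fun x => (F x) ^ 2 with hGdef
  set v : V := L ξ with hvdef
  have hv : v ∈ A := hLA ξ hξ
  have hLd : DifferentiableAt ℝ L ξ :=
    (hLsmooth.contDiffAt (hO.mem_nhds hξ)).differentiableAt (by simp)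
  set D : V := fderiv ℝ L ξ η with hDdef
  -- Step A: chain rule for the outer derivative
  have hA : fderiv ℝ (fun ζ : V →L[ℝ] ℝ => (F (L ζ)) ^ 2) ξ η = fderiv ℝ G v D := by
    have h := ((diffAt_sq hF hv).hasFDerivAt).comp ξ hLd.hasFDerivAt
    have h' : HasFDerivAt (fun ζ : V →L[ℝ] ℝ => (F (L ζ)) ^ 2)
        ((fderiv ℝ G v).comp (fderiv ℝ L ξ)) ξ := by
      simpa [Function.comp_def, hGdef] using h
    rw [h'.fderiv]
    rfl
  -- Legendre identity: ξ z = (1/2) * fderiv G v z for every z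
  have hleg : ∀ z : V, ξ z = (1 / 2) * fderiv ℝ G v z := by
    intro z
    rw [← hLinv ξ hξ z, fund_eq hF hv z]
  -- Step 2: differentiate the Legendre identity along L
  have hstep2 : ∀ z : V, fderiv ℝ (fderiv ℝ G) v D z = 2 * η z := by
    intro z
    have hΦz : HasFDerivAt (fun x => fderiv ℝ G x z)
        ((ContinuousLinearMap.apply ℝ ℝ z).comp (fderiv ℝ (fderiv ℝ G) v)) v :=
      fderiv_apply_comm (diff_fderiv_sq hF hv) z
    have hΨ : HasFDerivAt (fun ζ => fderiv ℝ G (L ζ) z)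
        (((ContinuousLinearMap.apply ℝ ℝ z).comp (fderiv ℝ (fderiv ℝ G) v)).comp
          (fderiv ℝ L ξ)) ξ := by
      simpa [Function.comp_def] using hΦz.comp ξ hLd.hasFDerivAt
    have hRHS : HasFDerivAt (fun ζ : V →L[ℝ] ℝ => 2 * ζ z)
        ((2 : ℝ) • ContinuousLinearMap.apply ℝ ℝ z) ξ := by
      have := (ContinuousLinearMap.apply ℝ ℝ z).hasFDerivAt (x := ξ)
      simpa using this.const_mul (2 : ℝ)
    have heq2 : (fun ζ => fderiv ℝ G (L ζ) z) =ᶠ[𝓝 ξ] (fun ζ : V →L[ℝ] ℝ => 2 * ζ z) := by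
      filter_upwards [hO.mem_nhds hξ] with ζ hζ
      have h1 := hLinv ζ hζ z
      rw [fund_eq hF (hLA ζ hζ) z] at h1
      linarith
    have h3 := (hΨ.congr_of_eventuallyEq heq2.symm).unique hRHS
    have h4 := congrFun (congrArg DFunLike.coe h3) η
    simpa using h4
  -- symmetry of the second derivative
  have hsym : IsSymmSndFDerivAt ℝ G v :=
    (contDiffAt_sq hF hv).isSymmSndFDerivAt (by rw [minSmoothness_of_isRCLikeNormedField]; exact WithTop.coe_le_coe.mpr (le_top (a := ((2 : ℕ) : ℕ∞))))
  -- put everything together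
  rw [hA, ← hleg D, hleg D, ← euler hF hv D, hsym v D, hstep2 v]
  ring
end

section
/- Let F be a pseudo-Minkowski norm on V whose domain A is convex and whose fundamental tensor g_v is positive definite for every v ∈ A (a conic Minkowski norm). Then for all u,v ∈ A one has g_u(u,v) ≤ F(u)·F(v); equivalently, for ξ = ℒ_F(u) the value F(u) is the maximum of ξ over the indicatrix {w ∈ A : F(w) = 1}. Moreover, the Legendre transformation ℒ_F : A → V* is injective. -/
section helpers
variable {V : Type*} [NormedAddCommGroup V] [NormedSpace ℝ V] {A : Set V} {F : V → ℝ}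

lemma pm_contDiffAt (hF : IsPseudoMinkowski A F) {v : V} (hv : v ∈ A) :
    ContDiffAt ℝ (⊤ : ℕ∞) (fun x => F x ^ 2) v :=
  (hF.smooth.pow 2).contDiffAt (hF.isOpen.mem_nhds hv)

lemma pm_hasFDerivAt (hF : IsPseudoMinkowski A F) {v : V} (hv : v ∈ A) :
    HasFDerivAt (fun x => F x ^ 2) (fderiv ℝ (fun x => F x ^ 2) v) v :=
  ((pm_contDiffAt hF hv).differentiableAt (by simp)).hasFDerivAt

lemma pm_phi_contDiffAt (hF : IsPseudoMinkowski A F) {v : V} (hv : v ∈ A) :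
    ContDiffAt ℝ (⊤ : ℕ∞) (fderiv ℝ (fun x => F x ^ 2)) v :=
  (pm_contDiffAt hF hv).fderiv_right (by simp)

lemma pm_phi_hasFDerivAt (hF : IsPseudoMinkowski A F) {v : V} (hv : v ∈ A) :
    HasFDerivAt (fderiv ℝ (fun x => F x ^ 2))
      (fderiv ℝ (fderiv ℝ (fun x => F x ^ 2)) v) v :=
  ((pm_phi_contDiffAt hF hv).differentiableAt (by simp)).hasFDerivAt

/-- curve t ↦ x + t • w -/
lemma curve_hasDerivAt (x w : V) (t : ℝ) :
    HasDerivAt (fun s : ℝ => x + s • w) w t := by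
  simpa using ((hasDerivAt_id t).smul_const w).const_add x

lemma pm_inner_deriv (hF : IsPseudoMinkowski A F) {x : V} (hx : x ∈ A) (w : V) :
    HasDerivAt (fun s : ℝ => F (x + s • w) ^ 2) (fderiv ℝ (fun y => F y ^ 2) x w) 0 := by
  have hG : HasFDerivAt (fun y => F y ^ 2) (fderiv ℝ (fun y => F y ^ 2) x) (x + (0:ℝ) • w) := by
    rw [show x + (0:ℝ) • w = x by simp]; exact pm_hasFDerivAt hF hx
  simpa [Function.comp_def] using hG.comp_hasDerivAt 0 (curve_hasDerivAt x w 0)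

/-- The key identity: `fundTensor` equals half the second Fréchet derivative of `F ^ 2`. -/
lemma pm_fundTensor_eq (hF : IsPseudoMinkowski A F) {v : V} (hv : v ∈ A) (u w : V) :
    fundTensor F v u w
      = (1 / 2) * fderiv ℝ (fderiv ℝ (fun x => F x ^ 2)) v u w := by
  have hT : ∀ᶠ t : ℝ in nhds 0, v + t • u ∈ A := by
    have : ContinuousAt (fun t : ℝ => v + t • u) 0 := by fun_prop
    have := this.preimage_mem_nhds (hF.isOpen.mem_nhds (by simpa using hv))
    exact this
  have heq : (fun t : ℝ => deriv (fun s : ℝ => F (v + t • u + s • w) ^ 2) 0)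
      =ᶠ[nhds 0] fun t : ℝ => fderiv ℝ (fun x => F x ^ 2) (v + t • u) w := by
    filter_upwards [hT] with t ht
    exact (pm_inner_deriv hF ht w).deriv
  have houter : HasDerivAt (fun t : ℝ => fderiv ℝ (fun x => F x ^ 2) (v + t • u) w)
      (fderiv ℝ (fderiv ℝ (fun x => F x ^ 2)) v u w) 0 := by
    have h1 : HasDerivAt (fun t : ℝ => fderiv ℝ (fun x => F x ^ 2) (v + t • u))
        (fderiv ℝ (fderiv ℝ (fun x => F x ^ 2)) v u) 0 := by
      have hP : HasFDerivAt (fderiv ℝ (fun x => F x ^ 2))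
          (fderiv ℝ (fderiv ℝ (fun x => F x ^ 2)) v) (v + (0:ℝ) • u) := by
        rw [show v + (0:ℝ) • u = v by simp]; exact pm_phi_hasFDerivAt hF hv
      simpa [Function.comp_def] using hP.comp_hasDerivAt 0 (curve_hasDerivAt v u 0)
    simpa using h1.clm_apply (hasDerivAt_const 0 w)
  have : deriv (fun t : ℝ => deriv (fun s : ℝ => F (v + t • u + s • w) ^ 2) 0) 0
      = fderiv ℝ (fderiv ℝ (fun x => F x ^ 2)) v u w := by
    rw [Filter.EventuallyEq.deriv_eq heq]
    exact houter.deriv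
  rw [fundTensor, this]

lemma pm_G_homog (hF : IsPseudoMinkowski A F) {x : V} (hx : x ∈ A) {l : ℝ} (hl : 0 < l) :
    F (l • x) ^ 2 = l ^ 2 * F x ^ 2 := by
  rw [hF.homog x hx l hl]; ring

/-- Homogeneity of degree 1 of the Fréchet derivative of `F ^ 2`. -/
lemma pm_fderiv_homog (hF : IsPseudoMinkowski A F) {v : V} (hv : v ∈ A) {l : ℝ} (hl : 0 < l) :
    fderiv ℝ (fun x => F x ^ 2) (l • v) = l • fderiv ℝ (fun x => F x ^ 2) v := by
  have hlv : l • v ∈ A := hF.conic v hv l hl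
  have hsm : HasFDerivAt (fun x : V => l • x) (l • ContinuousLinearMap.id ℝ V) v :=
    (l • ContinuousLinearMap.id ℝ V).hasFDerivAt
  have h1 : HasFDerivAt (fun x => F (l • x) ^ 2)
      ((fderiv ℝ (fun x => F x ^ 2) (l • v)).comp (l • ContinuousLinearMap.id ℝ V)) v :=
    (pm_hasFDerivAt hF hlv).comp v hsm
  have h2 : HasFDerivAt (fun x => F (l • x) ^ 2)
      (l ^ 2 • fderiv ℝ (fun x => F x ^ 2) v) v := by
    have hev : (fun x => l ^ 2 * F x ^ 2) =ᶠ[nhds v] fun x => F (l • x) ^ 2 := by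
      filter_upwards [hF.isOpen.mem_nhds hv] with x hx
      exact (pm_G_homog hF hx hl).symm
    have : HasFDerivAt (fun x => l ^ 2 * F x ^ 2)
        (l ^ 2 • fderiv ℝ (fun x => F x ^ 2) v) v := by
      exact (pm_hasFDerivAt hF hv).const_mul (l ^ 2)
    exact this.congr_of_eventuallyEq hev.symm
  have h3 := h1.unique h2
  ext w
  have := congrArg (fun T : V →L[ℝ] ℝ => T w) h3
  simp only [ContinuousLinearMap.comp_apply, ContinuousLinearMap.smul_apply,
    ContinuousLinearMap.id_apply, smul_eq_mul] at this ⊢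
  have hl' : l ≠ 0 := ne_of_gt hl
  -- this : fderiv (l•v) (l • w) = l^2 * fderiv v w
  rw [map_smul, smul_eq_mul] at this
  field_simp at this ⊢
  nlinarith [this]

/-- Euler: `D v v = 2 * F v ^ 2`. -/
lemma pm_euler1 (hF : IsPseudoMinkowski A F) {v : V} (hv : v ∈ A) :
    fderiv ℝ (fun x => F x ^ 2) v v = 2 * F v ^ 2 := by
  have hc : HasDerivAt (fun t : ℝ => t • v) v 1 := by
    simpa using (hasDerivAt_id (1 : ℝ)).smul_const v
  have h1 : HasDerivAt (fun t : ℝ => F (t • v) ^ 2)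
      (fderiv ℝ (fun x => F x ^ 2) v v) 1 := by
    have hG : HasFDerivAt (fun x => F x ^ 2) (fderiv ℝ (fun x => F x ^ 2) v) ((1:ℝ) • v) := by
      rw [one_smul]; exact pm_hasFDerivAt hF hv
    simpa [Function.comp_def] using hG.comp_hasDerivAt 1 hc
  have h2 : HasDerivAt (fun t : ℝ => F (t • v) ^ 2) (2 * F v ^ 2) 1 := by
    have hev : (fun t : ℝ => t ^ 2 * F v ^ 2) =ᶠ[nhds 1] fun t => F (t • v) ^ 2 := by
      filter_upwards [lt_mem_nhds (show (0:ℝ) < 1 by norm_num)] with t ht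
      exact (pm_G_homog hF hv ht).symm
    have : HasDerivAt (fun t : ℝ => t ^ 2 * F v ^ 2) (2 * F v ^ 2) 1 := by
      simpa using (hasDerivAt_pow 2 (1:ℝ)).mul_const (F v ^ 2)
    exact this.congr_of_eventuallyEq hev.symm
  exact h1.unique h2

/-- Euler: `B v v = D v`. -/
lemma pm_euler2 (hF : IsPseudoMinkowski A F) {v : V} (hv : v ∈ A) :
    fderiv ℝ (fderiv ℝ (fun x => F x ^ 2)) v v = fderiv ℝ (fun x => F x ^ 2) v := by
  have hc : HasDerivAt (fun t : ℝ => t • v) v 1 := by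
    simpa using (hasDerivAt_id (1 : ℝ)).smul_const v
  have h1 : HasDerivAt (fun t : ℝ => fderiv ℝ (fun x => F x ^ 2) (t • v))
      (fderiv ℝ (fderiv ℝ (fun x => F x ^ 2)) v v) 1 := by
    have hP : HasFDerivAt (fderiv ℝ (fun x => F x ^ 2))
        (fderiv ℝ (fderiv ℝ (fun x => F x ^ 2)) v) ((1:ℝ) • v) := by
      rw [one_smul]; exact pm_phi_hasFDerivAt hF hv
    simpa [Function.comp_def] using hP.comp_hasDerivAt 1 hc
  have h2 : HasDerivAt (fun t : ℝ => fderiv ℝ (fun x => F x ^ 2) (t • v))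
      (fderiv ℝ (fun x => F x ^ 2) v) 1 := by
    have hev : (fun t : ℝ => t • fderiv ℝ (fun x => F x ^ 2) v)
        =ᶠ[nhds 1] fun t => fderiv ℝ (fun x => F x ^ 2) (t • v) := by
      filter_upwards [lt_mem_nhds (show (0:ℝ) < 1 by norm_num)] with t ht
      exact (pm_fderiv_homog hF hv ht).symm
    have : HasDerivAt (fun t : ℝ => t • fderiv ℝ (fun x => F x ^ 2) v)
        (fderiv ℝ (fun x => F x ^ 2) v) 1 := by
      simpa using (hasDerivAt_id (1:ℝ)).smul_const (fderiv ℝ (fun x => F x ^ 2) v)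
    exact this.congr_of_eventuallyEq hev.symm
  exact h1.unique h2

end helpers

section mainhelpers
variable {V : Type*} [NormedAddCommGroup V] [NormedSpace ℝ V] {A : Set V} {F : V → ℝ}

/-- Strict convexity of `F ^ 2` along segments in `A`. -/
lemma pm_conv_strict (hF : IsPseudoMinkowski A F) (hconv : Convex ℝ A)
    (hposdef : ∀ v ∈ A, ∀ u : V, u ≠ 0 → 0 < fundTensor F v u u)
    {u v : V} (hu : u ∈ A) (hv : v ∈ A) (hne : u ≠ v) :
    fderiv ℝ (fun x => F x ^ 2) u (v - u) < F v ^ 2 - F u ^ 2 := by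
  set w : V := v - u with hwdef
  have hw : w ≠ 0 := sub_ne_zero.mpr (Ne.symm hne)
  have hseg : ∀ t ∈ Set.Icc (0:ℝ) 1, u + t • w ∈ A := by
    intro t ht
    have he : u + t • w = (1 - t) • u + t • v := by
      rw [hwdef]; module
    rw [he]
    exact hconv hu hv (by linarith [ht.2]) ht.1 (by ring)
  set ψ : ℝ → ℝ := fun t => fderiv ℝ (fun x => F x ^ 2) (u + t • w) w with hψdef
  have hφ' : ∀ t : ℝ, u + t • w ∈ A →
      HasDerivAt (fun s : ℝ => F (u + s • w) ^ 2) (ψ t) t := by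
    intro t ht
    simpa [Function.comp_def] using (pm_hasFDerivAt hF ht).comp_hasDerivAt t (curve_hasDerivAt u w t)
  have hψ' : ∀ t : ℝ, u + t • w ∈ A →
      HasDerivAt ψ (fderiv ℝ (fderiv ℝ (fun x => F x ^ 2)) (u + t • w) w w) t := by
    intro t ht
    have h1 : HasDerivAt (fun s : ℝ => fderiv ℝ (fun x => F x ^ 2) (u + s • w))
        (fderiv ℝ (fderiv ℝ (fun x => F x ^ 2)) (u + t • w) w) t := by
      simpa [Function.comp_def] using (pm_phi_hasFDerivAt hF ht).comp_hasDerivAt t (curve_hasDerivAt u w t)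
    simpa [hψdef] using h1.clm_apply (hasDerivAt_const t w)
  have hpos : ∀ t : ℝ, u + t • w ∈ A →
      0 < fderiv ℝ (fderiv ℝ (fun x => F x ^ 2)) (u + t • w) w w := by
    intro t ht
    have := hposdef _ ht w hw
    rw [pm_fundTensor_eq hF ht w w] at this
    linarith
  have hmono : StrictMonoOn ψ (Set.Icc (0:ℝ) 1) := by
    apply strictMonoOn_of_deriv_pos (convex_Icc 0 1)
    · intro t ht
      exact ((hψ' t (hseg t ht)).differentiableAt.continuousAt).continuousWithinAt
    · intro t ht
      rw [interior_Icc] at ht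
      have h := hψ' t (hseg t (Set.Ioo_subset_Icc_self ht))
      rw [h.deriv]
      exact hpos t (hseg t (Set.Ioo_subset_Icc_self ht))
  obtain ⟨c, hc, hceq⟩ := exists_hasDerivAt_eq_slope (fun s : ℝ => F (u + s • w) ^ 2) ψ
    zero_lt_one
    (fun t ht => ((hφ' t (hseg t ht)).differentiableAt.continuousAt).continuousWithinAt)
    (fun t ht => hφ' t (hseg t (Set.Ioo_subset_Icc_self ht)))
  have hval : ψ c = F v ^ 2 - F u ^ 2 := by
    have h1 : u + (1:ℝ) • w = v := by rw [hwdef]; module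
    have h0 : u + (0:ℝ) • w = u := by module
    rw [hceq, h1, h0]; ring
  have hlt : ψ 0 < F v ^ 2 - F u ^ 2 := by
    rw [← hval]
    exact hmono (Set.left_mem_Icc.mpr zero_le_one)
      (Set.mem_Icc.mpr ⟨le_of_lt hc.1, le_of_lt hc.2⟩) hc.1
  have h0 : ψ 0 = fderiv ℝ (fun x => F x ^ 2) u w := by
    rw [hψdef]; norm_num
  rw [h0] at hlt
  exact hlt

lemma pm_conv (hF : IsPseudoMinkowski A F) (hconv : Convex ℝ A)
    (hposdef : ∀ v ∈ A, ∀ u : V, u ≠ 0 → 0 < fundTensor F v u u)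
    {u v : V} (hu : u ∈ A) (hv : v ∈ A) :
    fderiv ℝ (fun x => F x ^ 2) u (v - u) ≤ F v ^ 2 - F u ^ 2 := by
  rcases eq_or_ne u v with rfl | hne
  · simp
  · exact le_of_lt (pm_conv_strict hF hconv hposdef hu hv hne)

end mainhelpers

/-- For a conic Minkowski norm (convex domain and positive definite fundamental
tensor), the fundamental inequality `g_u(u,v) ≤ F(u)·F(v)` holds for all `u,v ∈ A`
(equivalently, `F(u)` is the maximum of `ℒ_F(u)` over the indicatrix), and the
Legendre transformation `ℒ_F(u) = g_u(u,·)` is injective on `A`. -/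
theorem stmt11 {V : Type*} [NormedAddCommGroup V] [NormedSpace ℝ V] [FiniteDimensional ℝ V]
    {A : Set V} {F : V → ℝ} (hF : IsPseudoMinkowski A F)
    (hconv : Convex ℝ A)
    (hposdef : ∀ v ∈ A, ∀ u : V, u ≠ 0 → 0 < fundTensor F v u u) :
    (∀ u ∈ A, ∀ v ∈ A, fundTensor F u u v ≤ F u * F v)
      ∧ (∀ u ∈ A, ∀ u' ∈ A,
          (∀ z : V, fundTensor F u u z = fundTensor F u' u' z) → u = u') := by
  -- `fundTensor F u u z` is half the derivative of `F ^ 2` at `u` in direction `z`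
  have hfe : ∀ u ∈ A, ∀ z : V,
      fundTensor F u u z = (1 / 2) * fderiv ℝ (fun x => F x ^ 2) u z := by
    intro u hu z
    rw [pm_fundTensor_eq hF hu, pm_euler2 hF hu]
  -- fundamental inequality for the derivative of `F ^ 2`
  have key : ∀ u ∈ A, ∀ v ∈ A,
      fderiv ℝ (fun x => F x ^ 2) u v ≤ 2 * F u * F v := by
    intro u hu v hv
    have ha : 0 < F u := hF.pos u hu
    have hb : 0 < F v := hF.pos v hv
    set l : ℝ := F u / F v with hldef
    have hlpos : 0 < l := div_pos ha hb
    have hlb : l * F v = F u := div_mul_cancel₀ _ (ne_of_gt hb)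
    have hv' : l • v ∈ A := hF.conic v hv l hlpos
    have h := pm_conv hF hconv hposdef hu hv'
    rw [map_sub, map_smul, pm_euler1 hF hu, pm_G_homog hF hv hlpos, smul_eq_mul] at h
    -- h : l * D u v - 2 * F u ^ 2 ≤ l ^ 2 * F v ^ 2 - F u ^ 2
    nlinarith [h, hlpos, hlb, mul_pos ha hb]
  have part1 : ∀ u ∈ A, ∀ v ∈ A, fundTensor F u u v ≤ F u * F v := by
    intro u hu v hv
    rw [hfe u hu v]
    have := key u hu v hv
    linarith
  refine ⟨part1, ?_⟩
  intro u hu u' hu' hz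
  have hD : ∀ z : V, fderiv ℝ (fun x => F x ^ 2) u z = fderiv ℝ (fun x => F x ^ 2) u' z := by
    intro z
    have h := hz z
    rw [hfe u hu z, hfe u' hu' z] at h
    linarith
  by_contra hne
  have ha : 0 < F u := hF.pos u hu
  have hb : 0 < F u' := hF.pos u' hu'
  -- D u u' = D u' u' = 2 F u' ^ 2 ≤ 2 F u F u'
  have h1 : 2 * F u' ^ 2 ≤ 2 * F u * F u' := by
    have := key u hu u' hu'
    rw [hD u', pm_euler1 hF hu'] at this
    linarith
  -- D u' u = D u u = 2 F u ^ 2 ≤ 2 F u' F u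
  have h2 : 2 * F u ^ 2 ≤ 2 * F u' * F u := by
    have := key u' hu' u hu
    rw [← hD u, pm_euler1 hF hu] at this
    linarith
  -- strict convexity gives a contradiction
  have h3 := pm_conv_strict hF hconv hposdef hu hu' hne
  rw [map_sub, pm_euler1 hF hu, hD u', pm_euler1 hF hu'] at h3
  -- h3 : 2 F u' ^ 2 - 2 F u ^ 2 < F u' ^ 2 - F u ^ 2
  nlinarith [h1, h2, h3, ha, hb]
end

section
/- Let F be a pseudo-Minkowski norm on V whose domain A is convex and which is of Lorentz type: for every v ∈ A the restriction of the fundamental tensor g_v to the hyperplane {z ∈ V : g_v(v,z) = 0} is negative definite (so g_v has index dim V − 1). Then for all u,v ∈ A one has g_u(u,v) ≥ F(u)·F(v); equivalently, for ξ = ℒ_F(u) the value F(u) is the minimum of ξ over the indicatrix {w ∈ A : F(w) = 1}. -/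
open Filter Topology Set

section aux
variable {V : Type*} [NormedAddCommGroup V] [NormedSpace ℝ V] {A : Set V} {F : V → ℝ}

/-- Derivative along a line. -/
lemma pm_line {E : Type*} [NormedAddCommGroup E] [NormedSpace ℝ E]
    {f : V → E} {p x : V} {t : ℝ} (hf : DifferentiableAt ℝ f (p + t • x)) :
    HasDerivAt (fun s : ℝ => f (p + s • x)) (fderiv ℝ f (p + t • x) x) t := by
  have h1 : HasDerivAt (fun s : ℝ => p + s • x) x t := by
    simpa using ((hasDerivAt_id t).smul_const x).const_add p
  exact hf.hasFDerivAt.comp_hasDerivAt t h1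

lemma pm_diffF (hF : IsPseudoMinkowski A F) {p : V} (hp : p ∈ A) :
    DifferentiableAt ℝ F p :=
  ((hF.smooth.contDiffAt (hF.isOpen.mem_nhds hp)).differentiableAt (by simp))

lemma pm_contDiffAtG (hF : IsPseudoMinkowski A F) {p : V} (hp : p ∈ A) :
    ContDiffAt ℝ (⊤ : ℕ∞) (fun w => F w ^ 2) p :=
  ((hF.smooth.pow 2).contDiffAt (hF.isOpen.mem_nhds hp))

lemma pm_diffG (hF : IsPseudoMinkowski A F) {p : V} (hp : p ∈ A) :
    DifferentiableAt ℝ (fun w => F w ^ 2) p :=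
  (pm_contDiffAtG hF hp).differentiableAt (by simp)

lemma pm_diffD (hF : IsPseudoMinkowski A F) {p : V} (hp : p ∈ A) :
    DifferentiableAt ℝ (fderiv ℝ (fun w => F w ^ 2)) p :=
  ((pm_contDiffAtG hF hp).fderiv_right (m := 1) (by exact WithTop.coe_le_coe.mpr le_top)).differentiableAt one_ne_zero

/-- The first derivative of `F ^ 2`. -/
lemma pm_D_eq (hF : IsPseudoMinkowski A F) {p : V} (hp : p ∈ A) (y : V) :
    fderiv ℝ (fun w => F w ^ 2) p y = 2 * F p * fderiv ℝ F p y := by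
  have h1 : HasFDerivAt (fun w => F w ^ 2) ((2 * F p) • fderiv ℝ F p) p := by
    have := ((pm_diffF hF hp).hasFDerivAt).mul ((pm_diffF hF hp).hasFDerivAt)
    have h2 : F p • fderiv ℝ F p + F p • fderiv ℝ F p = (2 * F p) • fderiv ℝ F p := by
      rw [← add_smul]; ring_nf
    rw [h2] at this
    simpa only [pow_two, Pi.mul_def] using this
  rw [h1.fderiv]; simp [mul_assoc]

/-- `fundTensor` in terms of the second derivative of `F ^ 2`. -/
lemma pm_fund_eq (hF : IsPseudoMinkowski A F) {p : V} (hp : p ∈ A) (x y : V) :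
    fundTensor F p x y
      = (1 / 2) * (fderiv ℝ (fderiv ℝ (fun w => F w ^ 2)) p x) y := by
  set G := fun w => F w ^ 2 with hG
  have hmem : ∀ᶠ t : ℝ in 𝓝 (0 : ℝ), p + t • x ∈ A := by
    have hc : ContinuousAt (fun t : ℝ => p + t • x) 0 := by fun_prop
    have := hc.preimage_mem_nhds (hF.isOpen.mem_nhds (by simpa using hp))
    exact this
  have hinner : (fun t : ℝ => deriv (fun s : ℝ => (F (p + t • x + s • y)) ^ 2) 0)
      =ᶠ[𝓝 (0 : ℝ)] fun t => fderiv ℝ G (p + t • x) y := by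
    filter_upwards [hmem] with t ht
    have hd : DifferentiableAt ℝ G ((p + t • x) + (0 : ℝ) • y) := by
      simpa using pm_diffG hF ht
    have := (pm_line (f := G) (p := p + t • x) (x := y) (t := 0) hd).deriv
    simpa using this
  have houter : HasDerivAt (fun t : ℝ => fderiv ℝ G (p + t • x) y)
      ((fderiv ℝ (fderiv ℝ G) p x) y) 0 := by
    have hd : DifferentiableAt ℝ (fderiv ℝ G) (p + (0 : ℝ) • x) := by
      simpa using pm_diffD hF hp
    have h1 := pm_line (f := fderiv ℝ G) (p := p) (x := x) (t := 0) hd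
    have h2 := (ContinuousLinearMap.apply ℝ ℝ y).hasFDerivAt.comp_hasDerivAt 0 h1
    simpa [Function.comp_def] using h2
  rw [fundTensor, hinner.deriv_eq, houter.deriv]

/-- Symmetry of the second derivative. -/
lemma pm_symm (hF : IsPseudoMinkowski A F) {p : V} (hp : p ∈ A) (x y : V) :
    fderiv ℝ (fderiv ℝ (fun w => F w ^ 2)) p x y
      = fderiv ℝ (fderiv ℝ (fun w => F w ^ 2)) p y x := by
  apply second_derivative_symmetric_of_eventually (f := fun w => F w ^ 2)
    (f' := fderiv ℝ (fun w => F w ^ 2))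
  · filter_upwards [hF.isOpen.mem_nhds hp] with q hq using (pm_diffG hF hq).hasFDerivAt
  · exact (pm_diffD hF hp).hasFDerivAt

/-- Homogeneity of degree 1 of the derivative of `F ^ 2`. -/
lemma pm_D_smul (hF : IsPseudoMinkowski A F) {p : V} (hp : p ∈ A) {l : ℝ} (hl : 0 < l)
    (y : V) : fderiv ℝ (fun w => F w ^ 2) (l • p) y = l * fderiv ℝ (fun w => F w ^ 2) p y := by
  set G := fun w => F w ^ 2 with hGdef
  have hlp : l • p ∈ A := hF.conic p hp l hl
  have hlin : HasFDerivAt (fun w : V => l • w) (l • ContinuousLinearMap.id ℝ V) p :=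
    (l • ContinuousLinearMap.id ℝ V).hasFDerivAt
  have h1 : HasFDerivAt (fun w => G (l • w))
      ((fderiv ℝ G (l • p)).comp (l • ContinuousLinearMap.id ℝ V)) p :=
    (pm_diffG hF hlp).hasFDerivAt.comp p hlin
  have hev : (fun w => l ^ 2 * G w) =ᶠ[𝓝 p] fun w => G (l • w) := by
    filter_upwards [hF.isOpen.mem_nhds hp] with q hq
    simp only [hGdef]
    rw [hF.homog q hq l hl]; ring
  have h1' : HasFDerivAt (fun w => l ^ 2 * G w)
      ((fderiv ℝ G (l • p)).comp (l • ContinuousLinearMap.id ℝ V)) p :=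
    h1.congr_of_eventuallyEq hev
  have h2 : HasFDerivAt (fun w => l ^ 2 * G w) ((l ^ 2) • fderiv ℝ G p) p :=
    (pm_diffG hF hp).hasFDerivAt.const_mul (l ^ 2)
  have huniq := h1'.unique h2
  have := congrArg (fun (T : V →L[ℝ] ℝ) => T y) huniq
  simp only [ContinuousLinearMap.comp_apply, ContinuousLinearMap.smul_apply,
    ContinuousLinearMap.id_apply, smul_eq_mul, map_smul] at this
  nlinarith [this]

/-- Euler's identity for `F`. -/
lemma pm_euler (hF : IsPseudoMinkowski A F) {p : V} (hp : p ∈ A) :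
    fderiv ℝ F p p = F p := by
  have hd : DifferentiableAt ℝ F ((0 : V) + (1:ℝ) • p) := by simpa using pm_diffF hF hp
  have h1 : HasDerivAt (fun l : ℝ => F ((0:V) + l • p)) (fderiv ℝ F p p) 1 := by
    have := pm_line (f := F) (p := (0:V)) (x := p) (t := 1) hd
    simpa using this
  have h2 : (fun l : ℝ => l * F p) =ᶠ[𝓝 (1:ℝ)] fun l : ℝ => F ((0:V) + l • p) := by
    filter_upwards [eventually_gt_nhds zero_lt_one] with l hl
    simp [hF.homog p hp l hl]
  have h3 : HasDerivAt (fun l : ℝ => l * F p) (fderiv ℝ F p p) 1 :=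
    h1.congr_of_eventuallyEq h2
  have h4 : HasDerivAt (fun l : ℝ => l * F p) (F p) 1 := by
    simpa using (hasDerivAt_id (1:ℝ)).mul_const (F p)
  exact h3.unique h4

/-- Euler's identity for the second derivative of `F ^ 2`. -/
lemma pm_D2_p (hF : IsPseudoMinkowski A F) {p : V} (hp : p ∈ A) (y : V) :
    fderiv ℝ (fderiv ℝ (fun w => F w ^ 2)) p p y = fderiv ℝ (fun w => F w ^ 2) p y := by
  set G := fun w => F w ^ 2 with hGdef
  have houter : HasDerivAt (fun t : ℝ => fderiv ℝ G (p + t • p) y)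
      ((fderiv ℝ (fderiv ℝ G) p p) y) 0 := by
    have hd : DifferentiableAt ℝ (fderiv ℝ G) (p + (0 : ℝ) • p) := by
      simpa using pm_diffD hF hp
    have h1 := pm_line (f := fderiv ℝ G) (p := p) (x := p) (t := 0) hd
    have h2 := (ContinuousLinearMap.apply ℝ ℝ y).hasFDerivAt.comp_hasDerivAt 0 h1
    simpa [Function.comp_def] using h2
  have hev : (fun t : ℝ => (1 + t) * fderiv ℝ G p y)
      =ᶠ[𝓝 (0:ℝ)] fun t : ℝ => fderiv ℝ G (p + t • p) y := by
    filter_upwards [eventually_gt_nhds (by norm_num : (-1:ℝ) < 0)] with t ht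
    have h1t : (0:ℝ) < 1 + t := by linarith
    have : p + t • p = (1 + t) • p := by rw [add_smul, one_smul]
    rw [this, pm_D_smul hF hp h1t]
  have h3 : HasDerivAt (fun t : ℝ => (1 + t) * fderiv ℝ G p y)
      ((fderiv ℝ (fderiv ℝ G) p p) y) 0 := houter.congr_of_eventuallyEq hev
  have h4 : HasDerivAt (fun t : ℝ => (1 + t) * fderiv ℝ G p y) (fderiv ℝ G p y) 0 := by
    simpa using ((hasDerivAt_id (0:ℝ)).const_add (1:ℝ)).mul_const (fderiv ℝ G p y)
  exact h3.unique h4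

/-- Reverse Cauchy-Schwarz from the Lorentz condition. -/
lemma pm_revCS (hF : IsPseudoMinkowski A F)
    (hlorentz : ∀ v ∈ A, ∀ z : V, fundTensor F v v z = 0 → z ≠ 0 →
      fundTensor F v z z < 0)
    {p : V} (hp : p ∈ A) (w : V) :
    fderiv ℝ (fderiv ℝ (fun q => F q ^ 2)) p w w * (2 * F p ^ 2)
      ≤ (fderiv ℝ (fun q => F q ^ 2) p w) ^ 2 := by
  set G := fun q => F q ^ 2 with hGdef
  set B := fderiv ℝ (fderiv ℝ G) p with hBdef
  have hBpy : ∀ y, B p y = fderiv ℝ G p y := fun y => pm_D2_p hF hp y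
  have hFpos := hF.pos p hp
  have hBpp : B p p = 2 * F p ^ 2 := by
    rw [hBpy, pm_D_eq hF hp, pm_euler hF hp]; ring
  set m : ℝ := 2 * F p ^ 2 with hm
  have hmpos : 0 < m := by positivity
  set c : ℝ := B p w / m with hc
  set z : V := w - c • p with hz
  have hBpz : B p z = 0 := by
    rw [hz, map_sub, map_smul, smul_eq_mul, hBpp, hc]
    field_simp
    ring
  have hfund0 : fundTensor F p p z = 0 := by
    rw [pm_fund_eq hF hp, ← hBdef, hBpz, mul_zero]
  have hzz : fundTensor F p z z ≤ 0 := by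
    rcases eq_or_ne z 0 with h0 | h0
    · rw [h0, pm_fund_eq hF hp, ← hBdef]; simp
    · exact (hlorentz p hp z hfund0 h0).le
  have hBzz : B z z ≤ 0 := by
    have := hzz
    rw [pm_fund_eq hF hp, ← hBdef] at this
    linarith
  have hexp : B z z = B w w - 2 * c * B p w + c ^ 2 * m := by
    have hwp : B w p = B p w := pm_symm hF hp w p
    rw [hz, map_sub, map_smul]
    simp only [ContinuousLinearMap.sub_apply, ContinuousLinearMap.smul_apply,
      map_sub, map_smul, smul_eq_mul, hBpp, hwp]
    ring
  rw [hexp, hc] at hBzz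
  have h1 : B w w - (B p w) ^ 2 / m ≤ 0 := by
    have : B w w - 2 * (B p w / m) * B p w + (B p w / m) ^ 2 * m
        = B w w - (B p w) ^ 2 / m := by field_simp; ring
    linarith [this ▸ hBzz]
  have h2 : B w w * m ≤ (B p w) ^ 2 := by
    have h3 := mul_le_mul_of_nonneg_right (sub_nonpos.1 h1) hmpos.le
    rwa [div_mul_cancel₀ _ hmpos.ne'] at h3
  rw [← hBpy w]
  exact h2
end aux

/-- For a Lorentz-type pseudo-Minkowski norm with convex domain (the fundamental
tensor is negative definite on the `g_v`-orthogonal hyperplane of `v`, so it has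
index `dim V − 1`), the reverse fundamental inequality `g_u(u,v) ≥ F(u)·F(v)` holds
for all `u,v ∈ A`; equivalently, `F(u)` is the minimum of `ℒ_F(u)` over the
indicatrix. -/
theorem stmt12 {V : Type*} [NormedAddCommGroup V] [NormedSpace ℝ V] [FiniteDimensional ℝ V]
    {A : Set V} {F : V → ℝ} (hF : IsPseudoMinkowski A F)
    (hconv : Convex ℝ A)
    (hlorentz : ∀ v ∈ A, ∀ z : V, fundTensor F v v z = 0 → z ≠ 0 →
      fundTensor F v z z < 0) :
    ∀ u ∈ A, ∀ v ∈ A, F u * F v ≤ fundTensor F u u v := by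
  intro u hu v hv
  classical
  set w : V := v - u with hwdef
  set γ : ℝ → V := fun t => u + t • w with hγdef
  have hγ0 : γ 0 = u := by simp [hγdef]
  have hγ1 : γ 1 = v := by simp [hγdef, hwdef]
  have hγA : ∀ t ∈ Icc (0:ℝ) 1, γ t ∈ A := by
    intro t ht
    have hmem := hconv hu hv (by linarith [ht.2] : (0:ℝ) ≤ 1 - t) ht.1 (by ring)
    have heq : γ t = (1 - t) • u + t • v := by
      simp only [hγdef, hwdef, smul_sub, sub_smul, one_smul]
      abel
    rw [heq]; exact hmem
  set e : ℝ → ℝ := fun t => fderiv ℝ F (γ t) w with hedef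
  set h : ℝ → ℝ := fun t => F (γ t) with hhdef
  have hder_h : ∀ t : ℝ, γ t ∈ A → HasDerivAt h (e t) t := by
    intro t ht
    exact pm_line (f := F) (p := u) (x := w) (t := t) (pm_diffF hF ht)
  have hder_e : ∀ t : ℝ, γ t ∈ A →
      HasDerivAt e ((fderiv ℝ (fderiv ℝ (fun q => F q ^ 2)) (γ t) w w - 2 * e t ^ 2)
        / (2 * h t)) t
      ∧ (fderiv ℝ (fderiv ℝ (fun q => F q ^ 2)) (γ t) w w - 2 * e t ^ 2) / (2 * h t) ≤ 0 := by
    intro t ht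
    have hFpos : 0 < h t := hF.pos _ ht
    have hder_φ : HasDerivAt (fun s : ℝ => fderiv ℝ (fun q => F q ^ 2) (γ s) w)
        (fderiv ℝ (fderiv ℝ (fun q => F q ^ 2)) (γ t) w w) t := by
      have h1 := pm_line (f := fderiv ℝ (fun q => F q ^ 2)) (p := u) (x := w) (t := t)
        (pm_diffD hF ht)
      exact (ContinuousLinearMap.apply ℝ ℝ w).hasFDerivAt.comp_hasDerivAt t h1
    have hmemS : ∀ᶠ s in 𝓝 t, γ s ∈ A := by
      have hc : ContinuousAt (fun s : ℝ => u + s • w) t := by fun_prop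
      have := hc.preimage_mem_nhds (hF.isOpen.mem_nhds ht)
      exact this
    have hphie : ∀ s : ℝ, γ s ∈ A →
        fderiv ℝ (fun q => F q ^ 2) (γ s) w = 2 * h s * e s := fun s hs => pm_D_eq hF hs w
    have heq : e =ᶠ[𝓝 t] fun s => fderiv ℝ (fun q => F q ^ 2) (γ s) w / (2 * h s) := by
      filter_upwards [hmemS] with s hs
      rw [hphie s hs]
      field_simp [(hF.pos _ hs).ne']
      exact (mul_div_cancel_right₀ (e s) (hF.pos _ hs).ne').symm
    have hne : (2 : ℝ) * h t ≠ 0 := by positivity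
    have hder_q : HasDerivAt (fun s => fderiv ℝ (fun q => F q ^ 2) (γ s) w / (2 * h s))
        ((fderiv ℝ (fderiv ℝ (fun q => F q ^ 2)) (γ t) w w * (2 * h t)
          - fderiv ℝ (fun q => F q ^ 2) (γ t) w * (2 * e t)) / (2 * h t) ^ 2) t :=
      hder_φ.div ((hder_h t ht).const_mul 2) hne
    have hval : (fderiv ℝ (fderiv ℝ (fun q => F q ^ 2)) (γ t) w w * (2 * h t)
          - fderiv ℝ (fun q => F q ^ 2) (γ t) w * (2 * e t)) / (2 * h t) ^ 2
        = (fderiv ℝ (fderiv ℝ (fun q => F q ^ 2)) (γ t) w w - 2 * e t ^ 2) / (2 * h t) := by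
      rw [hphie t ht]
      field_simp
    constructor
    · have := hder_q.congr_of_eventuallyEq heq
      rwa [hval] at this
    · apply div_nonpos_of_nonpos_of_nonneg _ (by positivity)
      have hrev := pm_revCS hF hlorentz ht w
      rw [hphie t ht] at hrev
      have hht : F (γ t) = h t := rfl
      rw [hht] at hrev
      nlinarith [hrev, hFpos, mul_pos hFpos hFpos]
  have hantitone : AntitoneOn e (Icc 0 1) := by
    apply antitoneOn_of_deriv_nonpos (convex_Icc 0 1)
    · intro t ht
      exact ((hder_e t (hγA t ht)).1.differentiableAt.continuousAt).continuousWithinAt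
    · intro t ht
      rw [interior_Icc] at ht
      exact ((hder_e t (hγA t (Ioo_subset_Icc_self ht))).1.differentiableAt).differentiableWithinAt
    · intro t ht
      rw [interior_Icc] at ht
      have hd := hder_e t (hγA t (Ioo_subset_Icc_self ht))
      rw [hd.1.deriv]; exact hd.2
  obtain ⟨c, hc, hslope⟩ := exists_hasDerivAt_eq_slope h e zero_lt_one
    (fun t ht => ((hder_h t (hγA t ht)).differentiableAt.continuousAt).continuousWithinAt)
    (fun t ht => hder_h t (hγA t (Ioo_subset_Icc_self ht)))
  have h10 : e c = F v - F u := by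
    rw [hslope]
    simp [hhdef, hγ1, hγ0]
  have hce : e c ≤ e 0 := hantitone (left_mem_Icc.2 zero_le_one) (Ioo_subset_Icc_self hc) hc.1.le
  have he0 : e 0 = fderiv ℝ F u v - F u := by
    simp only [hedef, hγ0, hwdef, map_sub, pm_euler hF hu]
  have hFv_le : F v ≤ fderiv ℝ F u v := by
    rw [h10] at hce
    rw [he0] at hce
    linarith
  have hfund : fundTensor F u u v = F u * fderiv ℝ F u v := by
    rw [pm_fund_eq hF hu, pm_D2_p hF hu, pm_D_eq hF hu]
    ring
  rw [hfund]
  exact mul_le_mul_of_nonneg_left hFv_le (hF.pos u hu).le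
end

section
/- Let E be a real Banach space, X₀, X₁ : E → E continuous vector fields, and ψ : ℝ × E → E a continuously differentiable map with ψ(0,x) = x for all x and ∂ψ/∂t(t,x) = X₁(ψ(t,x)) for all (t,x) (ψ is the flow of X₁). Let c : ℝ → E be a differentiable curve with c(0) = x₀ such that for all t the derivative of ψ(t,·) at c(t) maps c'(t) to X₀(ψ(t,c(t))) (i.e. c is an integral curve of the time-dependent pulled-back field Z_t = (ψ_t)*X₀). Then the curve γ(t) = ψ(t, c(t)) satisfies γ(0) = x₀ and γ'(t) = X₀(γ(t)) + X₁(γ(t)) for all t; that is, the flow of X₀ + X₁ is ψ_t ∘ ψ_t^Z. -/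
/-! The derivative of `s ↦ ψ(s, c s)` is the sum of the two partial derivatives of `ψ`: the time
derivative is `X₁` by the flow equation, and the space derivative applied to `c'(t)` is `X₀` by
the choice of `c`. -/

open ContinuousLinearMap

theorem DifferentiableAt.hasDerivAt_comp_prodMk {𝕜 E F : Type*} [NontriviallyNormedField 𝕜]
    [NormedAddCommGroup E] [NormedSpace 𝕜 E] [NormedAddCommGroup F] [NormedSpace 𝕜 F]
    {f : 𝕜 × E → F} {c : 𝕜 → E} {t : 𝕜} {ft : F} {c' : E} {fx : E →L[𝕜] F}
    (hf : DifferentiableAt 𝕜 f (t, c t))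
    (ht : HasDerivAt (fun s => f (s, c t)) ft t)
    (hx : HasFDerivAt (fun x => f (t, x)) fx (c t))
    (hc : HasDerivAt c c' t) :
    HasDerivAt (fun s => f (s, c s)) (ft + fx c') t := by
  set L := fderiv 𝕜 f (t, c t)
  have hL : HasFDerivAt f L (t, c t) := hf.hasFDerivAt
  have h_time : L.comp (inl 𝕜 𝕜 E) 1 = ft :=
    (hL.comp_hasDerivAt t ((hasDerivAt_id t).prodMk (hasDerivAt_const t (c t)))).unique ht
  have h_space : L.comp (inr 𝕜 𝕜 E) = fx :=
    (hL.comp (c t) (hasFDerivAt_prodMk_right t (c t))).unique hx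
  have h := hL.comp_hasDerivAt t ((hasDerivAt_id t).prodMk hc)
  rwa [← L.comp_inl_add_comp_inr, h_time, h_space] at h

theorem stmt15_general {E : Type*} [NormedAddCommGroup E] [NormedSpace ℝ E]
    (X₀ X₁ : E → E)
    (ψ : ℝ × E → E) (hψC1 : ContDiff ℝ 1 ψ)
    (hψ0 : ∀ x : E, ψ (0, x) = x)
    (hψflow : ∀ (t : ℝ) (x : E), HasDerivAt (fun s : ℝ => ψ (s, x)) (X₁ (ψ (t, x))) t)
    (c : ℝ → E) (x₀ : E) (hc0 : c 0 = x₀) (hc : Differentiable ℝ c)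
    (hcZ : ∀ t : ℝ, fderiv ℝ (fun x : E => ψ (t, x)) (c t) (deriv c t)
      = X₀ (ψ (t, c t))) :
    ψ (0, c 0) = x₀
      ∧ ∀ t : ℝ, HasDerivAt (fun s : ℝ => ψ (s, c s))
          (X₀ (ψ (t, c t)) + X₁ (ψ (t, c t))) t := by
  refine ⟨by rw [hψ0, hc0], fun t => ?_⟩
  have hψ_diff : Differentiable ℝ ψ := hψC1.differentiable one_ne_zero
  have h_space : DifferentiableAt ℝ (fun x : E => ψ (t, x)) (c t) :=
    (hψ_diff _).comp (c t) (differentiableAt_const t |>.prodMk differentiableAt_id)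
  have h := (hψ_diff _).hasDerivAt_comp_prodMk (hψflow t (c t)) h_space.hasFDerivAt
    (hc t).hasDerivAt
  rwa [hcZ, add_comm] at h

/-- Lemma on composition of flows. Let `ψ` be a `C¹` flow of a vector field `X₁`
on a Banach space `E`, and let `c` be an integral curve, starting at `x₀`, of the
time-dependent pulled-back field `Z_t = (ψ_t)*X₀` (i.e. the derivative of `ψ(t,·)`
at `c(t)` maps `c'(t)` to `X₀(ψ(t,c(t)))`). Then `γ(t) = ψ(t,c(t))` satisfies
`γ(0) = x₀` and `γ'(t) = X₀(γ(t)) + X₁(γ(t))`; that is, the flow of `X₀ + X₁` is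
`ψ_t ∘ ψ_t^Z`. -/
theorem stmt15 {E : Type*} [NormedAddCommGroup E] [NormedSpace ℝ E] [CompleteSpace E]
    (X₀ X₁ : E → E) (hX₀ : Continuous X₀) (hX₁ : Continuous X₁)
    (ψ : ℝ × E → E) (hψC1 : ContDiff ℝ 1 ψ)
    (hψ0 : ∀ x : E, ψ (0, x) = x)
    (hψflow : ∀ (t : ℝ) (x : E), HasDerivAt (fun s : ℝ => ψ (s, x)) (X₁ (ψ (t, x))) t)
    (c : ℝ → E) (x₀ : E) (hc0 : c 0 = x₀) (hc : Differentiable ℝ c)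
    (hcZ : ∀ t : ℝ, fderiv ℝ (fun x : E => ψ (t, x)) (c t) (deriv c t)
      = X₀ (ψ (t, c t))) :
    ψ (0, c 0) = x₀
      ∧ ∀ t : ℝ, HasDerivAt (fun s : ℝ => ψ (s, c s))
          (X₀ (ψ (t, c t)) + X₁ (ψ (t, c t))) t :=
  stmt15_general X₀ X₁ ψ hψC1 hψ0 hψflow c x₀ hc0 hc hcZ
end

section
/- Let E be a real Banach space, X, Y : E → E continuous vector fields, and σ ∈ ℝ. Let φ : ℝ × E → E be the flow of X (φ(0,x) = x, ∂φ/∂s(s,x) = X(φ(s,x))) and ψ : ℝ × E → E a continuously differentiable flow of Y (ψ(0,x) = x, ∂ψ/∂t(t,x) = Y(ψ(t,x))). Assume the homothety relation: for all t and x, the derivative of ψ(t,·) at x maps X(x) to e^{−σt}·X(ψ(t,x)) (equivalently, (ψ_t)*X = e^{σt}·X). Define f(t) = (e^{σt} − 1)/σ if σ ≠ 0 and f(t) = t if σ = 0. Then for every x₀ ∈ E the curve γ(t) = ψ(t, φ(f(t), x₀)) satisfies γ(0) = x₀ and γ'(t) = X(γ(t)) + Y(γ(t)); that is, the flow of X +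 Y equals ψ_t ∘ φ_{f(t)}. -/
/-! Along `γ(t) = ψ(t, c(t))` with `c(t) = φ(f(t), x₀)`, the chain rule splits `γ'(t)` into the
time partial `Y(γ(t))` of `ψ` and the space partial `Dψ_t(c(t))(c'(t))`. Since
`c'(t) = f'(t) X(c(t)) = e^{σt} X(c(t))`, the homothety relation turns the latter into
`e^{σt} e^{−σt} X(γ(t)) = X(γ(t))`; `f` is the solution of `f' = e^{σt}`, `f(0) = 0`. -/

theorem DifferentiableAt.hasDerivAt_comp_prodMk_s16 {E F : Type*} [NormedAddCommGroup E]
    [NormedSpace ℝ E] [NormedAddCommGroup F] [NormedSpace ℝ F] {ψ : ℝ × E → F} {c : ℝ → E}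
    {t : ℝ} {w : E} {u v : F} (hψ : DifferentiableAt ℝ ψ (t, c t)) (hc : HasDerivAt c w t)
    (htime : HasDerivAt (fun s => ψ (s, c t)) u t)
    (hspace : fderiv ℝ (fun y => ψ (t, y)) (c t) w = v) :
    HasDerivAt (fun s => ψ (s, c s)) (u + v) t := by
  have hD := hψ.hasFDerivAt
  have htime' : fderiv ℝ ψ (t, c t) (1, 0) = u :=
    (hD.comp_hasDerivAt t ((hasDerivAt_id t).prodMk (hasDerivAt_const t (c t)))).unique htime
  have hspace' : fderiv ℝ ψ (t, c t) (0, w) = v := by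
    have hslice : HasFDerivAt (fun y => ψ (t, y))
        ((fderiv ℝ ψ (t, c t)).comp (.inr ℝ ℝ E)) (c t) :=
      hD.comp (c t) (hasFDerivAt_prodMk_right t (c t))
    rw [← hspace, hslice.fderiv]
    rfl
  have hsplit : ((1 : ℝ), w) = (1, 0) + (0, w) := by simp
  rw [← htime', ← hspace', ← map_add, ← hsplit]
  exact hD.comp_hasDerivAt t ((hasDerivAt_id t).prodMk hc)

theorem hasDerivAt_ite_exp_sub_one_div (σ t : ℝ) :
    HasDerivAt (fun t : ℝ => if σ = 0 then t else (Real.exp (σ * t) - 1) / σ)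
      (Real.exp (σ * t)) t := by
  by_cases hσ : σ = 0
  · simpa [hσ] using hasDerivAt_id' t
  · simp only [hσ, if_false]
    simpa [mul_div_cancel_right₀ _ hσ] using
      (((hasDerivAt_id t).const_mul σ).exp.sub_const 1).div_const σ

theorem stmt16_general {E : Type*} [NormedAddCommGroup E] [NormedSpace ℝ E]
    (X Y : E → E) (σ : ℝ)
    (φ : ℝ × E → E) (hφ0 : ∀ x : E, φ (0, x) = x)
    (hφflow : ∀ (s : ℝ) (x : E), HasDerivAt (fun r : ℝ => φ (r, x)) (X (φ (s, x))) s)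
    (ψ : ℝ × E → E) (hψC1 : ContDiff ℝ 1 ψ) (hψ0 : ∀ x : E, ψ (0, x) = x)
    (hψflow : ∀ (t : ℝ) (x : E), HasDerivAt (fun s : ℝ => ψ (s, x)) (Y (ψ (t, x))) t)
    (hhom : ∀ (t : ℝ) (x : E), fderiv ℝ (fun y : E => ψ (t, y)) x (X x)
      = Real.exp (-σ * t) • X (ψ (t, x)))
    (f : ℝ → ℝ) (hf : ∀ t : ℝ, f t = if σ = 0 then t else (Real.exp (σ * t) - 1) / σ)
    (x₀ : E) :
    ψ (0, φ (f 0, x₀)) = x₀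
      ∧ ∀ t : ℝ, HasDerivAt (fun s : ℝ => ψ (s, φ (f s, x₀)))
          (X (ψ (t, φ (f t, x₀))) + Y (ψ (t, φ (f t, x₀)))) t := by
  have hf0 : f 0 = 0 := by simp [hf]
  refine ⟨by rw [hf0, hφ0, hψ0], fun t => ?_⟩
  have hf' : HasDerivAt f (Real.exp (σ * t)) t :=
    funext hf ▸ hasDerivAt_ite_exp_sub_one_div σ t
  have hc : HasDerivAt (fun s => φ (f s, x₀)) (Real.exp (σ * t) • X (φ (f t, x₀))) t :=
    (hφflow (f t) x₀).scomp t hf'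
  rw [add_comm]
  refine (hψC1.differentiable one_ne_zero _).hasDerivAt_comp_prodMk_s16 hc (hψflow t _) ?_
  rw [map_smul, hhom, smul_smul, ← Real.exp_add, show σ * t + -σ * t = 0 by ring,
    Real.exp_zero, one_smul]

/-- Flows of a sum `X + Y` when `Y` is homothetic for `X`. Let `φ` be the flow of
`X` and `ψ` a `C¹` flow of `Y` on a Banach space `E`, and assume the homothety
relation: the derivative of `ψ(t,·)` at `x` maps `X(x)` to `e^{−σt}·X(ψ(t,x))`
(i.e. `(ψ_t)*X = e^{σt}·X`). With `f(t) = (e^{σt} − 1)/σ` for `σ ≠ 0` and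
`f(t) = t` for `σ = 0`, the curve `γ(t) = ψ(t, φ(f(t), x₀))` satisfies `γ(0) = x₀`
and `γ'(t) = X(γ(t)) + Y(γ(t))`; that is, the flow of `X + Y` is `ψ_t ∘ φ_{f(t)}`. -/
theorem stmt16 {E : Type*} [NormedAddCommGroup E] [NormedSpace ℝ E] [CompleteSpace E]
    (X Y : E → E) (hX : Continuous X) (hY : Continuous Y) (σ : ℝ)
    (φ : ℝ × E → E) (hφ0 : ∀ x : E, φ (0, x) = x)
    (hφflow : ∀ (s : ℝ) (x : E), HasDerivAt (fun r : ℝ => φ (r, x)) (X (φ (s, x))) s)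
    (ψ : ℝ × E → E) (hψC1 : ContDiff ℝ 1 ψ) (hψ0 : ∀ x : E, ψ (0, x) = x)
    (hψflow : ∀ (t : ℝ) (x : E), HasDerivAt (fun s : ℝ => ψ (s, x)) (Y (ψ (t, x))) t)
    (hhom : ∀ (t : ℝ) (x : E), fderiv ℝ (fun y : E => ψ (t, y)) x (X x)
      = Real.exp (-σ * t) • X (ψ (t, x)))
    (f : ℝ → ℝ) (hf : ∀ t : ℝ, f t = if σ = 0 then t else (Real.exp (σ * t) - 1) / σ)
    (x₀ : E) :
    ψ (0, φ (f 0, x₀)) = x₀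
      ∧ ∀ t : ℝ, HasDerivAt (fun s : ℝ => ψ (s, φ (f s, x₀)))
          (X (ψ (t, φ (f t, x₀))) + Y (ψ (t, φ (f t, x₀)))) t :=
  stmt16_general X Y σ φ hφ0 hφflow ψ hψC1 hψ0 hψflow hhom f hf x₀
end
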